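/- Assume homoskedasticity with σ²_ν > 0. The ordinary least squares estimator uses the matrix G = M, which satisfies MW = 0, MZ̃ = Z̃, and tr(M) = n − L; hence E[xᵀMx] = ‖ℓ̃‖² + (n − L)·σ²_ν and the exact ratio-of-expectations bias of ordinary least squares is E[yᵀMx]/E[xᵀMx] − β = (n − L)·σ_{εν}/(‖ℓ̃‖² + (n − L)·σ²_ν). -/

import Mathlib

/-!
Since `ν` is centred and the pairs `(ε_i, ν_i)` are independent across `i`, both `u = x` and
`u = ε` have cross moments `E[u_i ν_j] = s·[i = j]`; hence, writing `x = c + ν` with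
`c = Z̃π + Wδ` deterministic, `E[uᵀ A x] = E[u]ᵀ A c + s · tr A` for every matrix `A`.
For the annihilator `A = M` of `W` we have `M c = ℓ̃`, `E[x] = c`, and `E[ε] = W α` is orthogonal
to `ℓ̃`; the bias then follows from `E[yᵀMx] = β E[xᵀMx] + E[εᵀMx]`.
-/

open MeasureTheory Matrix BigOperators ProbabilityTheory

namespace Matrix

variable {m l k K : Type*} [Fintype m] [Fintype l]

theorem mulVec_dotProduct_mulVec_eq_zero [CommRing K] [Fintype k] {W : Matrix m l K}
    {Z : Matrix m k K} (hWZ : Wᵀ * Z = 0) (u : l → K) (v : k → K) :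
    W *ᵥ u ⬝ᵥ Z *ᵥ v = 0 := by
  rw [dotProduct_mulVec, ← vecMul_transpose, vecMul_vecMul, hWZ, vecMul_zero, zero_dotProduct]

theorem dotProduct_mulVec_eq_sum [CommSemiring K] (A : Matrix m l K) (u : m → K) (v : l → K) :
    u ⬝ᵥ A *ᵥ v = ∑ i, ∑ j, A i j * (u i * v j) := by
  simp only [dotProduct, mulVec, Finset.mul_sum]
  exact Finset.sum_congr rfl fun i _ => Finset.sum_congr rfl fun j _ => by ring

theorem sum_sum_mul_add_ite [DecidableEq m] [CommSemiring K] (A : Matrix m m K) (a c : m → K)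
    (s : K) :
    ∑ i, ∑ j, A i j * (a i * c j + if i = j then s else 0) = a ⬝ᵥ A *ᵥ c + s * A.trace := by
  simp only [mul_add, mul_ite, mul_zero, Finset.sum_add_distrib, Finset.sum_ite_eq,
    Finset.mem_univ, if_true, dotProduct_mulVec_eq_sum, trace, diag, Finset.mul_sum]
  simp [mul_comm]

variable [DecidableEq m] [DecidableEq l]

theorem isUnit_of_rank_eq_card [Field K] {A : Matrix l l K} (h : A.rank = Fintype.card l) :
    IsUnit A := by
  rw [← mulVec_surjective_iff_isUnit, ← coe_mulVecLin, ← LinearMap.range_eq_top]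
  exact Submodule.eq_top_of_finrank_eq
    (by rw [← rank, h, Module.finrank_fintype_fun_eq_card])

noncomputable def annihilator [CommRing K] (W : Matrix m l K) : Matrix m m K :=
  1 - W * (Wᵀ * W)⁻¹ * Wᵀ

variable [CommRing K] {W : Matrix m l K}

theorem annihilator_mul_self (hW : IsUnit (Wᵀ * W)) : annihilator W * W = 0 := by
  rw [annihilator, Matrix.sub_mul, Matrix.one_mul, Matrix.mul_assoc _ Wᵀ, Matrix.mul_assoc,
    nonsing_inv_mul _ ((isUnit_iff_isUnit_det _).mp hW), Matrix.mul_one, sub_self]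

theorem annihilator_mul_of_transpose_mul_eq_zero [Fintype k] {Z : Matrix m k K}
    (hWZ : Wᵀ * Z = 0) : annihilator W * Z = Z := by
  rw [annihilator, Matrix.sub_mul, Matrix.one_mul, Matrix.mul_assoc, hWZ, Matrix.mul_zero,
    sub_zero]

theorem trace_annihilator (hW : IsUnit (Wᵀ * W)) :
    (annihilator W).trace = Fintype.card m - Fintype.card l := by
  rw [annihilator, trace_sub, trace_one, Matrix.mul_assoc, trace_mul_comm, Matrix.mul_assoc,
    nonsing_inv_mul _ ((isUnit_iff_isUnit_det _).mp hW), trace_one]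

end Matrix

section Moments

variable {Ω ι : Type*} [MeasurableSpace Ω] {μ : Measure Ω}

theorem integral_mul_const_add {f g : Ω → ℝ} (hf : Integrable f μ)
    (hfg : Integrable (fun ω => f ω * g ω) μ) (c : ℝ) :
    ∫ ω, f ω * (c + g ω) ∂μ = (∫ ω, f ω ∂μ) * c + ∫ ω, f ω * g ω ∂μ := by
  simp only [mul_add]
  rw [integral_add (hf.mul_const c) hfg, integral_mul_const]

theorem integral_const_add_mul {f g : Ω → ℝ} (hg : Integrable g μ)
    (hfg : Integrable (fun ω => f ω * g ω) μ) (c : ℝ) :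
    ∫ ω, (c + f ω) * g ω ∂μ = c * (∫ ω, g ω ∂μ) + ∫ ω, f ω * g ω ∂μ := by
  simp only [add_mul]
  rw [integral_add (hg.const_mul c) hfg, integral_const_mul]

variable [Fintype ι] {u v : Ω → ι → ℝ}

theorem integrable_dotProduct_mulVec (A : Matrix ι ι ℝ)
    (hu : ∀ i, MemLp (fun ω => u ω i) 2 μ)
    (hv : ∀ i, MemLp (fun ω => v ω i) 2 μ) :
    Integrable (fun ω => u ω ⬝ᵥ A *ᵥ v ω) μ := by
  simp only [dotProduct_mulVec_eq_sum]
  exact integrable_finsetSum _ fun i _ => integrable_finsetSum _ fun j _ =>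
    ((hu i).integrable_mul (hv j)).const_mul _

theorem integral_dotProduct_mulVec (A : Matrix ι ι ℝ)
    (hu : ∀ i, MemLp (fun ω => u ω i) 2 μ)
    (hv : ∀ i, MemLp (fun ω => v ω i) 2 μ) :
    ∫ ω, u ω ⬝ᵥ A *ᵥ v ω ∂μ = ∑ i, ∑ j, A i j * ∫ ω, u ω i * v ω j ∂μ := by
  have hint : ∀ i j, Integrable (fun ω => A i j * (u ω i * v ω j)) μ := fun i j =>
    ((hu i).integrable_mul (hv j)).const_mul _
  simp only [dotProduct_mulVec_eq_sum]
  rw [integral_finsetSum _ fun i _ => integrable_finsetSum _ fun j _ => hint i j]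
  refine Finset.sum_congr rfl fun i _ => ?_
  rw [integral_finsetSum _ fun j _ => hint i j]
  simp only [integral_const_mul]

theorem integral_smul_add_dotProduct_mulVec {w : Ω → ι → ℝ} (A : Matrix ι ι ℝ) (β : ℝ)
    (hu : ∀ i, MemLp (fun ω => u ω i) 2 μ) (hw : ∀ i, MemLp (fun ω => w ω i) 2 μ)
    (hv : ∀ i, MemLp (fun ω => v ω i) 2 μ) :
    ∫ ω, (β • u ω + w ω) ⬝ᵥ A *ᵥ v ω ∂μ
      = β * ∫ ω, u ω ⬝ᵥ A *ᵥ v ω ∂μ + ∫ ω, w ω ⬝ᵥ A *ᵥ v ω ∂μ := by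
  rw [← integral_const_mul,
    ← integral_add ((integrable_dotProduct_mulVec A hu hv).const_mul β)
      (integrable_dotProduct_mulVec A hw hv)]
  simp only [add_dotProduct, smul_dotProduct, smul_eq_mul]

variable [DecidableEq ι]

theorem integral_dotProduct_mulVec_const_add [IsFiniteMeasure μ] {ν : Ω → ι → ℝ}
    (A : Matrix ι ι ℝ) (c : ι → ℝ)
    (hu : ∀ i, MemLp (fun ω => u ω i) 2 μ) (hν : ∀ i, MemLp (fun ω => ν ω i) 2 μ) {s : ℝ}
    (hcov : ∀ i j, ∫ ω, u ω i * ν ω j ∂μ = if i = j then s else 0) :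
    ∫ ω, u ω ⬝ᵥ A *ᵥ (c + ν ω) ∂μ = (fun i => ∫ ω, u ω i ∂μ) ⬝ᵥ A *ᵥ c + s * A.trace := by
  have hv : ∀ i, MemLp (fun ω => (c + ν ω) i) 2 μ := fun i => (memLp_const (c i)).add (hν i)
  rw [integral_dotProduct_mulVec A hu hv, ← sum_sum_mul_add_ite]
  refine Finset.sum_congr rfl fun i _ => Finset.sum_congr rfl fun j _ => ?_
  rw [← hcov, ← integral_mul_const_add ((hu i).integrable one_le_two)
    ((hu i).integrable_mul (hν j))]
  rfl

theorem integral_dotProduct_mulVec_const_add_of_iIndepFun [IsFiniteMeasure μ] {ν : Ω → ι → ℝ}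
    (A : Matrix ι ι ℝ) (c : ι → ℝ) (hind : iIndepFun (fun i ω => (u ω i, ν ω i)) μ)
    (hu : ∀ i, MemLp (fun ω => u ω i) 2 μ) (hν : ∀ i, MemLp (fun ω => ν ω i) 2 μ)
    (hν₀ : ∀ i, ∫ ω, ν ω i ∂μ = 0) {s : ℝ} (hs : ∀ i, ∫ ω, u ω i * ν ω i ∂μ = s) :
    ∫ ω, u ω ⬝ᵥ A *ᵥ (c + ν ω) ∂μ = (fun i => ∫ ω, u ω i ∂μ) ⬝ᵥ A *ᵥ c + s * A.trace := by
  refine integral_dotProduct_mulVec_const_add A c hu hν fun i j => ?_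
  split_ifs with hij
  · rw [hij, hs]
  · rw [← mul_zero (∫ ω, u ω i ∂μ), ← hν₀ j]
    exact ((hind.indepFun hij).comp measurable_fst measurable_snd)
      |>.integral_fun_mul_eq_mul_integral (hu i).1 (hν j).1

theorem integral_const_add_dotProduct_mulVec_const_add [IsProbabilityMeasure μ]
    {ν : Ω → ι → ℝ} (A : Matrix ι ι ℝ) (c : ι → ℝ) (hind : iIndepFun (fun i ω => ν ω i) μ)
    (hν : ∀ i, MemLp (fun ω => ν ω i) 2 μ) (hν₀ : ∀ i, ∫ ω, ν ω i ∂μ = 0) {s : ℝ}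
    (hs : ∀ i, ∫ ω, (ν ω i) ^ 2 ∂μ = s) :
    ∫ ω, (c + ν ω) ⬝ᵥ A *ᵥ (c + ν ω) ∂μ = c ⬝ᵥ A *ᵥ c + s * A.trace := by
  have hxind : iIndepFun (fun i ω => ((c + ν ω) i, ν ω i)) μ :=
    hind.comp (fun i t => (c i + t, t)) fun i => by fun_prop
  have hx : ∀ i, MemLp (fun ω => (c + ν ω) i) 2 μ := fun i => (memLp_const (c i)).add (hν i)
  have hxmean : (fun i => ∫ ω, (c + ν ω) i ∂μ) = c := funext fun i => by
    simp only [Pi.add_apply]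
    rw [integral_add (integrable_const _) ((hν i).integrable one_le_two), hν₀, add_zero,
      integral_const, probReal_univ, one_smul]
  have hxν : ∀ i, ∫ ω, (c + ν ω) i * ν ω i ∂μ = s := fun i => by
    simp only [Pi.add_apply]
    rw [integral_const_add_mul ((hν i).integrable one_le_two) ((hν i).integrable_mul (hν i)),
      hν₀, mul_zero, zero_add, ← hs i]
    simp only [sq]
  rw [integral_dotProduct_mulVec_const_add_of_iIndepFun A c hxind hx hν hν₀ hxν, hxmean]

end Moments

theorem stmt7_general
    {Ω : Type*} [MeasurableSpace Ω] (μ : Measure Ω) [IsProbabilityMeasure μ]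
    (n K L : ℕ) (hLn : L < n)
    (W : Matrix (Fin n) (Fin L) ℝ) (Z : Matrix (Fin n) (Fin K) ℝ)
    (hWrank : W.rank = L) (hWZ : Wᵀ * Z = 0)
    (M : Matrix (Fin n) (Fin n) ℝ)
    (hM : M = 1 - W * (Wᵀ * W)⁻¹ * Wᵀ)
    (ε ν : Ω → Fin n → ℝ)
    (hindep : ProbabilityTheory.iIndepFun
      (fun i ω => (ε ω i, ν ω i)) μ)
    (hεL2 : ∀ i, MemLp (fun ω => ε ω i) 2 μ)
    (hνL2 : ∀ i, MemLp (fun ω => ν ω i) 2 μ)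
    (α : Fin L → ℝ) (π : Fin K → ℝ) (δ : Fin L → ℝ) (β : ℝ)
    (hνmean : ∀ i, ∫ ω, ν ω i ∂μ = 0)
    (hεmean : ∀ i, ∫ ω, ε ω i ∂μ = W i ⬝ᵥ α)
    (σνsq σεν : ℝ) (hσν : 0 < σνsq)
    (hhomν : ∀ i, ∫ ω, (ν ω i) ^ 2 ∂μ = σνsq)
    (hhomεν : ∀ i, ∫ ω, ε ω i * ν ω i ∂μ = σεν)
    (x y : Ω → Fin n → ℝ) (ℓ : Fin n → ℝ)
    (hx : ∀ ω, x ω = Z *ᵥ π + W *ᵥ δ + ν ω)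
    (hℓ : ℓ = Z *ᵥ π)
    (hy : ∀ ω, y ω = β • x ω + ε ω) :
    M * W = 0 ∧ M * Z = Z ∧ M.trace = (n : ℝ) - L ∧
    (∫ ω, x ω ⬝ᵥ (M *ᵥ x ω) ∂μ = ℓ ⬝ᵥ ℓ + ((n : ℝ) - L) * σνsq) ∧
    ((∫ ω, y ω ⬝ᵥ (M *ᵥ x ω) ∂μ) / (∫ ω, x ω ⬝ᵥ (M *ᵥ x ω) ∂μ) - β
      = ((n : ℝ) - L) * σεν / (ℓ ⬝ᵥ ℓ + ((n : ℝ) - L) * σνsq)) := by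
  have hWW : IsUnit (Wᵀ * W) :=
    isUnit_of_rank_eq_card (by rw [rank_transpose_mul_self, hWrank, Fintype.card_fin])
  obtain rfl : M = annihilator W := hM
  have hMW := annihilator_mul_self hWW
  have hMZ := annihilator_mul_of_transpose_mul_eq_zero (W := W) hWZ
  have hMtr : (annihilator W).trace = (n : ℝ) - L := by simpa using trace_annihilator hWW
  set c := Z *ᵥ π + W *ᵥ δ
  obtain rfl : x = fun ω => c + ν ω := funext hx
  obtain rfl : y = fun ω => β • (c + ν ω) + ε ω := funext hy
  subst hℓ
  have hMc : annihilator W *ᵥ c = Z *ᵥ π := by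
    rw [mulVec_add, mulVec_mulVec, mulVec_mulVec, hMZ, hMW, zero_mulVec, add_zero]
  have hxMx : ∫ ω, (c + ν ω) ⬝ᵥ annihilator W *ᵥ (c + ν ω) ∂μ
      = Z *ᵥ π ⬝ᵥ Z *ᵥ π + ((n : ℝ) - L) * σνsq := by
    have hνind : iIndepFun (fun i ω => ν ω i) μ :=
      hindep.comp (fun _ p => p.2) fun _ => measurable_snd
    rw [integral_const_add_dotProduct_mulVec_const_add _ c hνind hνL2 hνmean hhomν,
      hMc, hMtr, add_dotProduct, mulVec_dotProduct_mulVec_eq_zero hWZ, add_zero, mul_comm σνsq]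
  have hεMx : ∫ ω, ε ω ⬝ᵥ annihilator W *ᵥ (c + ν ω) ∂μ = ((n : ℝ) - L) * σεν := by
    rw [integral_dotProduct_mulVec_const_add_of_iIndepFun _ c hindep hεL2 hνL2 hνmean hhomεν,
      funext hεmean, hMc, hMtr, show (fun i => W i ⬝ᵥ α) = W *ᵥ α from rfl,
      mulVec_dotProduct_mulVec_eq_zero hWZ, zero_add, mul_comm]
  have hpos : 0 < Z *ᵥ π ⬝ᵥ Z *ᵥ π + ((n : ℝ) - L) * σνsq :=
    add_pos_of_nonneg_of_pos (dotProduct_self_star_nonneg _)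
      (mul_pos (sub_pos.2 (Nat.cast_lt.2 hLn)) hσν)
  have hxL2 : ∀ i, MemLp (fun ω => (c + ν ω) i) 2 μ := fun i => (memLp_const (c i)).add (hνL2 i)
  refine ⟨hMW, hMZ, hMtr, hxMx, ?_⟩
  rw [integral_smul_add_dotProduct_mulVec _ β hxL2 hεL2 hxL2, hxMx, hεMx]
  field_simp
  ring

/-- Under homoskedasticity with `σ²_ν > 0`, the OLS matrix `M` satisfies
`MW = 0`, `MZ̃ = Z̃`, `tr(M) = n − L`, hence `E[xᵀMx] = ‖ℓ̃‖² + (n − L)·σ²_ν` and the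
ratio-of-expectations bias of OLS is `(n − L)·σ_{εν}/(‖ℓ̃‖² + (n − L)·σ²_ν)`. -/
theorem stmt7
    {Ω : Type*} [MeasurableSpace Ω] (μ : Measure Ω) [IsProbabilityMeasure μ]
    (n K L : ℕ) (hn : 1 ≤ n) (hK : 1 ≤ K) (hL : 1 ≤ L) (hLn : L < n)
    (W : Matrix (Fin n) (Fin L) ℝ) (Z : Matrix (Fin n) (Fin K) ℝ)
    (hWrank : W.rank = L) (hZrank : Z.rank = K) (hWZ : Wᵀ * Z = 0)
    (M : Matrix (Fin n) (Fin n) ℝ)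
    (hM : M = 1 - W * (Wᵀ * W)⁻¹ * Wᵀ)
    (ε ν : Ω → Fin n → ℝ)
    (hmeas : ∀ i, Measurable (fun ω => (ε ω i, ν ω i)))
    (hindep : ProbabilityTheory.iIndepFun
      (fun i ω => (ε ω i, ν ω i)) μ)
    (hεL2 : ∀ i, MemLp (fun ω => ε ω i) 2 μ)
    (hνL2 : ∀ i, MemLp (fun ω => ν ω i) 2 μ)
    (α : Fin L → ℝ) (π : Fin K → ℝ) (δ : Fin L → ℝ) (β : ℝ)
    (hνmean : ∀ i, ∫ ω, ν ω i ∂μ = 0)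
    (hεmean : ∀ i, ∫ ω, ε ω i ∂μ = W i ⬝ᵥ α)
    (σνsq σεν : ℝ) (hσν : 0 < σνsq)
    (hhomν : ∀ i, ∫ ω, (ν ω i) ^ 2 ∂μ = σνsq)
    (hhomεν : ∀ i, ∫ ω, ε ω i * ν ω i ∂μ = σεν)
    (x y : Ω → Fin n → ℝ) (ℓ : Fin n → ℝ)
    (hx : ∀ ω, x ω = Z *ᵥ π + W *ᵥ δ + ν ω)
    (hℓ : ℓ = Z *ᵥ π)
    (hy : ∀ ω, y ω = β • x ω + ε ω) :
    M * W = 0 ∧ M * Z = Z ∧ M.trace = (n : ℝ) - L ∧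
    (∫ ω, x ω ⬝ᵥ (M *ᵥ x ω) ∂μ = ℓ ⬝ᵥ ℓ + ((n : ℝ) - L) * σνsq) ∧
    ((∫ ω, y ω ⬝ᵥ (M *ᵥ x ω) ∂μ) / (∫ ω, x ω ⬝ᵥ (M *ᵥ x ω) ∂μ) - β
      = ((n : ℝ) - L) * σεν / (ℓ ⬝ᵥ ℓ + ((n : ℝ) - L) * σνsq)) :=
  stmt7_general μ n K L hLn W Z hWrank hWZ M hM ε ν hindep hεL2 hνL2 α π δ β hνmean hεmean σνsq σεν
    hσν hhomν hhomεν x y ℓ hx hℓ hy
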